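/- Let Z be a zone over the clock set C and suppose there exists a valuation v ∈ ℝ≥0^C such that v + d ∈ Z for all d ∈ ℝ≥0 (i.e., Z contains a full time-elapse ray, for instance Z contains S↑ for some nonempty set S with S↑ = S). Then Z is closed under time successors: Z↑ = Z. -/

import Mathlib

/-- A bound `(k, ≺)`: an integer `k` together with a strictness flag
(`true` codes `≤`, `false` codes `<`), ordered lexicographically,
so that `(k, <) < (k, ≤) < (k+1, <)`. -/
abbrev Bnd : Type := Lex (ℤ × Bool)

/-- Addition of bounds: `(k,≺) + (k',≺')` is `(k+k', ≺'')` where `≺''` is `≤`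
iff both `≺` and `≺'` are `≤`. -/
instance : Add Bnd :=
  ⟨fun a b => toLex ((ofLex a).1 + (ofLex b).1, (ofLex a).2 && (ofLex b).2)⟩

/-- The zero bound is `(0, ≤)`. -/
instance : Zero Bnd := ⟨toLex (0, true)⟩

instance : AddCommMonoid Bnd where
  add a b := toLex ((ofLex a).1 + (ofLex b).1, (ofLex a).2 && (ofLex b).2)
  zero := toLex (0, true)
  nsmul := nsmulRec
  add_assoc a b c := by
    change toLex (((ofLex a).1 + (ofLex b).1) + (ofLex c).1,
        (((ofLex a).2 && (ofLex b).2) && (ofLex c).2)) =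
      toLex ((ofLex a).1 + ((ofLex b).1 + (ofLex c).1),
        ((ofLex a).2 && ((ofLex b).2 && (ofLex c).2)))
    rw [add_assoc, Bool.and_assoc]
  zero_add a := by
    change toLex ((0 : ℤ) + (ofLex a).1, (true && (ofLex a).2)) = a
    simp
  add_zero a := by
    change toLex ((ofLex a).1 + (0 : ℤ), ((ofLex a).2 && true)) = a
    simp
  add_comm a b := by
    change toLex ((ofLex a).1 + (ofLex b).1, ((ofLex a).2 && (ofLex b).2)) =
      toLex ((ofLex b).1 + (ofLex a).1, ((ofLex b).2 && (ofLex a).2))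
    rw [add_comm, Bool.and_comm]

/-- `satB d b` says that `d ≺ k`, where `b = (k, ≺)`. -/
def satB (d : ℝ) (b : Bnd) : Prop :=
  if (ofLex b).2 then d ≤ ((ofLex b).1 : ℝ) else d < ((ofLex b).1 : ℝ)

variable {C : Type*}

/-- Extended valuation on `C0 = C ∪ {0}`: the special clock `0` is `none`. -/
def val0 (v : C → ℝ) : Option C → ℝ := fun x => x.elim 0 v

/-- The zone defined by a finite set of atomic constraints `x - y ≺ k`. -/
def zoneOf (G : Finset (Option C × Option C × Bnd)) : Set (C → ℝ) :=
  {v | (∀ c, 0 ≤ v c) ∧ ∀ g ∈ G, satB (val0 v g.1 - val0 v g.2.1) g.2.2}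

/-- A zone: a set of (nonnegative) clock valuations defined by a finite set of
atomic constraints. -/
def IsZone (Z : Set (C → ℝ)) : Prop :=
  ∃ G : Finset (Option C × Option C × Bnd), Z = zoneOf G


/-- The set of time successors of a set of valuations:
`S↑ = {v + d : v ∈ S, d ≥ 0}`. -/
def timeSucc (S : Set (C → ℝ)) : Set (C → ℝ) :=
  {w | ∃ v ∈ S, ∃ d : ℝ, 0 ≤ d ∧ w = fun c => v c + d}

/-!
Along a ray `v + d` the value of `x - 0` grows without bound, so a zone containing a ray has no
constraint `x - 0 ≺ k`. Every other kind of constraint (`x - y`, `0 - y`, `0 - 0`) is only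
relaxed by letting time elapse, hence such a zone is closed under time successors.
-/

lemma satB_of_le {d d' : ℝ} {b : Bnd} (h : d' ≤ d) (hb : satB d b) : satB d' b := by
  unfold satB at *
  split at hb <;> simp_all <;> linarith

lemma not_satB_of_lt {d : ℝ} {b : Bnd} (h : ((ofLex b).1 : ℝ) < d) : ¬ satB d b := by
  unfold satB
  split <;> simp only [not_le, not_lt] <;> linarith

lemma val0_add_sub_val0_add_le {v : C → ℝ} {d : ℝ} (hd : 0 ≤ d) {x y : Option C}
    (hxy : ∀ c, (x, y) ≠ (some c, none)) :
    val0 (fun c => v c + d) x - val0 (fun c => v c + d) y ≤ val0 v x - val0 v y := by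
  rcases x with _ | x <;> rcases y with _ | y
  · simp [val0]
  · simp [val0, hd]
  · exact absurd rfl (hxy x)
  · simp [val0]

lemma upper_bound_not_mem_of_ray {G : Finset (Option C × Option C × Bnd)} {v : C → ℝ}
    (hray : ∀ d : ℝ, 0 ≤ d → (fun c => v c + d) ∈ zoneOf G) (c : C) (b : Bnd) :
    (some c, none, b) ∉ G := by
  intro hg
  set d := max 0 (((ofLex b).1 : ℝ) + 1 - v c)
  have hsat := (hray d (le_max_left _ _)).2 _ hg
  refine not_satB_of_lt ?_ hsat
  have : ((ofLex b).1 : ℝ) + 1 - v c ≤ d := le_max_right _ _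
  simp only [val0, Option.elim]
  linarith

lemma timeSucc_zoneOf_subset {G : Finset (Option C × Option C × Bnd)}
    (hG : ∀ c b, (some c, none, b) ∉ G) : timeSucc (zoneOf G) ⊆ zoneOf G := by
  rintro _ ⟨u, ⟨hu_nonneg, hu_sat⟩, d, hd, rfl⟩
  refine ⟨fun c => add_nonneg (hu_nonneg c) hd, fun g hg => ?_⟩
  refine satB_of_le (val0_add_sub_val0_add_le hd fun c hc => ?_) (hu_sat g hg)
  obtain ⟨x, y, b⟩ := g
  obtain ⟨rfl, rfl⟩ := Prod.mk.inj hc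
  exact hG c b hg

lemma subset_timeSucc (S : Set (C → ℝ)) : S ⊆ timeSucc S :=
  fun w hw => ⟨w, hw, 0, le_rfl, by simp⟩

theorem zone_with_ray_timeSucc_closed_general {C : Type*} (Z : Set (C → ℝ))
    (hZ : IsZone Z) (v : C → ℝ)
    (hray : ∀ d : ℝ, 0 ≤ d → (fun c => v c + d) ∈ Z) :
    timeSucc Z = Z := by
  obtain ⟨G, rfl⟩ := hZ
  exact (timeSucc_zoneOf_subset (upper_bound_not_mem_of_ray hray)).antisymm (subset_timeSucc _)

/-- If a zone `Z` contains a full time-elapse ray `{v + d : d ≥ 0}` for some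
valuation `v ∈ ℝ≥0^C`, then `Z` is closed under time successors: `Z↑ = Z`. -/
theorem zone_with_ray_timeSucc_closed {C : Type*} (Z : Set (C → ℝ))
    (hZ : IsZone Z) (v : C → ℝ) (hv : ∀ c, 0 ≤ v c)
    (hray : ∀ d : ℝ, 0 ≤ d → (fun c => v c + d) ∈ Z) :
    timeSucc Z = Z :=
  zone_with_ray_timeSucc_closed_general Z hZ v hray
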